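/- arXiv:2009.00903 — 3 statements merged into one kernel-verified Lean document; each statement's English description precedes it below -/
import Mathlib

section
/- Let A be a finite alphabet equipped with a commutative and associative bilinear bracket [,] on the free vector space R^A. The quasi-shuffle product on the tensor algebra T(A), defined recursively by 1 ⊛ v = v ⊛ 1 = v and va ⊛ wb = (v ⊛ wb)a + (va ⊛ w)b + (v ⊛ w)[ab] for words v,w and letters a,b, is commutative and associative. -/
/-! The recursion `va ⊛ wb = (v ⊛ wb)a + (va ⊛ w)b + (v ⊛ w)[ab]` extends bilinearly from letters
and words to generalized letters `c, d ∈ ℝ^A` and arbitrary `x, y ∈ T(A)`. Both identities are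
then proved on words by induction on the total length: for commutativity the recursion is
symmetric once `[ab] = [ba]`; for associativity both `(ua ⊛ vb) ⊛ wc` and `ua ⊛ (vb ⊛ wc)` expand
into seven terms that match pairwise by induction, the last pair through `[[ab]c] = [a[bc]]`. -/

open Finsupp
open scoped Classical

noncomputable section

/-- `T(A)`: the free real vector space on words over the alphabet `A`. -/
abbrev TA (A : Type) := List A →₀ ℝ

/-- The basis word `w` viewed as an element of `T(A)`. -/
def wordE {A : Type} (w : List A) : TA A := Finsupp.single w 1

/-- Right-concatenation of a letter, extended linearly. -/
def appLetter {A : Type} (a : A) : TA A →ₗ[ℝ] TA A :=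
  Finsupp.lmapDomain ℝ ℝ (fun u => u ++ [a])

/-- Right-concatenation of a "generalized letter" `c ∈ ℝ^A`, extended bilinearly. -/
def appGen {A : Type} (c : A →₀ ℝ) (y : TA A) : TA A :=
  c.sum fun x r => r • appLetter x y

/-- A bilinear map `M` on `T(A)` is the quasi-shuffle product associated to the
bracket `br` if it satisfies `1 ⊛ v = v ⊛ 1 = v` and the recursion
`va ⊛ wb = (v ⊛ wb)a + (va ⊛ w)b + (v ⊛ w)[ab]`. -/
def IsQuasiShuffle {A : Type} (br : A → A → (A →₀ ℝ))
    (M : TA A →ₗ[ℝ] TA A →ₗ[ℝ] TA A) : Prop :=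
  (∀ x : TA A, M (wordE []) x = x) ∧ (∀ x : TA A, M x (wordE []) = x) ∧
  ∀ (v w : List A) (a b : A),
    M (wordE (v ++ [a])) (wordE (w ++ [b])) =
      appLetter a (M (wordE v) (wordE (w ++ [b]))) +
      appLetter b (M (wordE (v ++ [a])) (wordE w)) +
      appGen (br a b) (M (wordE v) (wordE w))

/-- Bilinear extension of the bracket `br` to `ℝ^A`. -/
def brExt {A : Type} (br : A → A → (A →₀ ℝ)) (f g : A →₀ ℝ) : A →₀ ℝ :=
  f.sum fun a ra => g.sum fun b rb => (ra * rb) • br a b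

section

variable {A : Type}

theorem single_eq_smul_wordE (v : List A) (r : ℝ) : (single v r : TA A) = r • wordE v := by
  simp [wordE]

theorem appLetter_wordE (a : A) (v : List A) :
    appLetter a (wordE v) = wordE (v ++ [a]) := by
  simp [appLetter, wordE, mapDomain_single]

theorem appGen_eq_linearCombination (c : A →₀ ℝ) (y : TA A) :
    appGen c y = linearCombination ℝ appLetter c y := by
  simp only [appGen, linearCombination_apply, LinearMap.finsupp_sum_apply, LinearMap.smul_apply]

theorem appGen_single_one (a : A) (y : TA A) :
    appGen (single a 1) y = appLetter a y := by
  simp [appGen_eq_linearCombination]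

theorem brExt_eq_linearCombination (br : A → A → (A →₀ ℝ)) (f g : A →₀ ℝ) :
    brExt br f g = linearCombination ℝ (fun a => linearCombination ℝ (br a)) f g := by
  simp only [brExt, linearCombination_apply, LinearMap.finsupp_sum_apply, LinearMap.smul_apply,
    Finsupp.smul_sum, mul_smul]

theorem brExt_single_one (br : A → A → (A →₀ ℝ)) (a b : A) :
    brExt br (single a 1) (single b 1) = br a b := by
  simp [brExt_eq_linearCombination]

end

namespace IsQuasiShuffle

variable {A : Type} {br : A → A → (A →₀ ℝ)} {M : TA A →ₗ[ℝ] TA A →ₗ[ℝ] TA A}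

theorem appLetter_appLetter (hM : IsQuasiShuffle br M) (a b : A) (x y : TA A) :
    M (appLetter a x) (appLetter b y) =
      appLetter a (M x (appLetter b y)) + appLetter b (M (appLetter a x) y) +
        appGen (br a b) (M x y) := by
  simp only [appGen_eq_linearCombination]
  induction x using Finsupp.induction_linear with
  | zero => simp
  | add x₁ x₂ h₁ h₂ => simp only [map_add, LinearMap.add_apply, h₁, h₂]; abel
  | single v r =>
    induction y using Finsupp.induction_linear with
    | zero => simp
    | add y₁ y₂ h₁ h₂ => simp only [map_add, h₁, h₂]; abel
    | single w s =>
      have h := hM.2.2 v w a b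
      simp only [← appLetter_wordE, appGen_eq_linearCombination] at h
      rw [single_eq_smul_wordE v r, single_eq_smul_wordE w s]
      simp only [map_smul, LinearMap.smul_apply, h]
      module

theorem appGen_appGen (hM : IsQuasiShuffle br M) (c d : A →₀ ℝ) (x y : TA A) :
    M (appGen c x) (appGen d y) =
      appGen c (M x (appGen d y)) + appGen d (M (appGen c x) y) +
        appGen (brExt br c d) (M x y) := by
  simp only [appGen_eq_linearCombination, brExt_eq_linearCombination]
  induction c using Finsupp.induction_linear with
  | zero => simp
  | add c₁ c₂ h₁ h₂ => simp only [map_add, LinearMap.add_apply, h₁, h₂]; abel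
  | single a r =>
    induction d using Finsupp.induction_linear with
    | zero => simp
    | add d₁ d₂ h₁ h₂ => simp only [map_add, LinearMap.add_apply, h₁, h₂]; abel
    | single b s =>
      have h := hM.appLetter_appLetter a b x y
      simp only [appGen_eq_linearCombination] at h
      simp only [linearCombination_single, map_smul, LinearMap.smul_apply, h]
      module

theorem comm_wordE (hM : IsQuasiShuffle br M) (hbr_comm : ∀ a b : A, br a b = br b a)
    (v w : List A) : M (wordE v) (wordE w) = M (wordE w) (wordE v) := by
  rcases List.eq_nil_or_concat' v with rfl | ⟨v, a, rfl⟩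
  · rw [hM.1, hM.2.1]
  rcases List.eq_nil_or_concat' w with rfl | ⟨w, b, rfl⟩
  · rw [hM.1, hM.2.1]
  rw [hM.2.2, hM.2.2, hbr_comm, comm_wordE hM hbr_comm v, comm_wordE hM hbr_comm (v ++ [a]) w,
    comm_wordE hM hbr_comm v w]
  abel
termination_by v.length + w.length

theorem comm (hM : IsQuasiShuffle br M) (hbr_comm : ∀ a b : A, br a b = br b a) (x y : TA A) :
    M x y = M y x := by
  have h : M = M.flip := by
    ext v w : 4
    exact hM.comm_wordE hbr_comm v w
  exact LinearMap.congr_fun₂ h x y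

theorem expand_left_nested (hM : IsQuasiShuffle br M) (u v w : List A) (a b c : A) :
    M (M (wordE (u ++ [a])) (wordE (v ++ [b]))) (wordE (w ++ [c])) =
      appLetter a (M (M (wordE u) (wordE (v ++ [b]))) (wordE (w ++ [c]))) +
      appLetter b (M (M (wordE (u ++ [a])) (wordE v)) (wordE (w ++ [c]))) +
      appGen (br a b) (M (M (wordE u) (wordE v)) (wordE (w ++ [c]))) +
      appLetter c (M (M (wordE (u ++ [a])) (wordE (v ++ [b]))) (wordE w)) +
      appGen (br a c) (M (M (wordE u) (wordE (v ++ [b]))) (wordE w)) +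
      appGen (br b c) (M (M (wordE (u ++ [a])) (wordE v)) (wordE w)) +
      appGen (brExt br (br a b) (single c 1)) (M (M (wordE u) (wordE v)) (wordE w)) := by
  rw [hM.2.2 u v a b, ← appLetter_wordE c w]
  -- every letter becomes the generalized letter `single a 1`, so that `appGen_appGen` applies
  simp only [← appGen_single_one, map_add, LinearMap.add_apply, hM.appGen_appGen,
    brExt_single_one]
  abel

theorem expand_right_nested (hM : IsQuasiShuffle br M) (u v w : List A) (a b c : A) :
    M (wordE (u ++ [a])) (M (wordE (v ++ [b])) (wordE (w ++ [c]))) =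
      appLetter a (M (wordE u) (M (wordE (v ++ [b])) (wordE (w ++ [c])))) +
      appLetter b (M (wordE (u ++ [a])) (M (wordE v) (wordE (w ++ [c])))) +
      appGen (br a b) (M (wordE u) (M (wordE v) (wordE (w ++ [c])))) +
      appLetter c (M (wordE (u ++ [a])) (M (wordE (v ++ [b])) (wordE w))) +
      appGen (br a c) (M (wordE u) (M (wordE (v ++ [b])) (wordE w))) +
      appGen (br b c) (M (wordE (u ++ [a])) (M (wordE v) (wordE w))) +
      appGen (brExt br (single a 1) (br b c)) (M (wordE u) (M (wordE v) (wordE w))) := by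
  rw [hM.2.2 v w b c, ← appLetter_wordE a u]
  simp only [← appGen_single_one, map_add, hM.appGen_appGen, brExt_single_one]
  abel

theorem assoc_wordE (hM : IsQuasiShuffle br M)
    (hbr_assoc : ∀ f g h : A →₀ ℝ, brExt br (brExt br f g) h = brExt br f (brExt br g h))
    (u v w : List A) :
    M (M (wordE u) (wordE v)) (wordE w) = M (wordE u) (M (wordE v) (wordE w)) := by
  rcases List.eq_nil_or_concat' u with rfl | ⟨u, a, rfl⟩
  · rw [hM.1, hM.1]
  rcases List.eq_nil_or_concat' v with rfl | ⟨v, b, rfl⟩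
  · rw [hM.2.1, hM.1]
  rcases List.eq_nil_or_concat' w with rfl | ⟨w, c, rfl⟩
  · rw [hM.2.1, hM.2.1]
  have hbr : brExt br (br a b) (single c 1) = brExt br (single a 1) (br b c) := by
    rw [← brExt_single_one br a b, hbr_assoc, brExt_single_one]
  rw [hM.expand_left_nested, hM.expand_right_nested, hbr,
    assoc_wordE hM hbr_assoc u (v ++ [b]) (w ++ [c]),
    assoc_wordE hM hbr_assoc (u ++ [a]) v (w ++ [c]),
    assoc_wordE hM hbr_assoc u v (w ++ [c]),
    assoc_wordE hM hbr_assoc (u ++ [a]) (v ++ [b]) w,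
    assoc_wordE hM hbr_assoc u (v ++ [b]) w,
    assoc_wordE hM hbr_assoc (u ++ [a]) v w,
    assoc_wordE hM hbr_assoc u v w]
termination_by u.length + v.length + w.length

theorem assoc (hM : IsQuasiShuffle br M)
    (hbr_assoc : ∀ f g h : A →₀ ℝ, brExt br (brExt br f g) h = brExt br f (brExt br g h))
    (x y z : TA A) : M (M x y) z = M x (M y z) := by
  -- `(llcomp.compl₁₂ M M) x y = M x ∘ₗ M y`
  have h : M.compr₂ M = (LinearMap.llcomp ℝ (TA A) (TA A) (TA A)).compl₁₂ M M := by
    ext u v w : 6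
    exact hM.assoc_wordE hbr_assoc u v w
  exact LinearMap.congr_fun (LinearMap.congr_fun₂ h x y) z

end IsQuasiShuffle

theorem quasiShuffle_comm_assoc_general {A : Type}
    (br : A → A → (A →₀ ℝ))
    (hbr_comm : ∀ a b : A, br a b = br b a)
    (hbr_assoc : ∀ f g h : A →₀ ℝ, brExt br (brExt br f g) h = brExt br f (brExt br g h))
    (M : TA A →ₗ[ℝ] TA A →ₗ[ℝ] TA A)
    (hM : IsQuasiShuffle br M) :
    (∀ x y : TA A, M x y = M y x) ∧
    (∀ x y z : TA A, M (M x y) z = M x (M y z)) :=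
  ⟨hM.comm hbr_comm, hM.assoc hbr_assoc⟩

/-- for a commutative, associative bilinear bracket on `ℝ^A`, the
quasi-shuffle product on `T(A)` is commutative and associative. -/
theorem quasiShuffle_comm_assoc {A : Type} [Fintype A]
    (br : A → A → (A →₀ ℝ))
    (hbr_comm : ∀ a b : A, br a b = br b a)
    (hbr_assoc : ∀ f g h : A →₀ ℝ, brExt br (brExt br f g) h = brExt br f (brExt br g h))
    (M : TA A →ₗ[ℝ] TA A →ₗ[ℝ] TA A)
    (hM : IsQuasiShuffle br M) :
    (∀ x y : TA A, M x y = M y x) ∧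
    (∀ x y z : TA A, M (M x y) z = M x (M y z)) :=
  quasiShuffle_comm_assoc_general br hbr_comm hbr_assoc M hM

end
end

section
/- For any two non-empty words w = a_1⋯a_n and v = b_1⋯b_m over an alphabet A with commutative bracket [,], the quasi-shuffle product satisfies w ⊛ v = Σ_{f ∈ S_{n,m}} [a_1⋯a_n b_1⋯b_m]_f, where S_{n,m} is the set of surjections f : {1,…,n+m} → {1,…,k} (for some k with max(m,n) ≤ k ≤ n+m) that are increasing on {1,…,n} and on {n+1,…,n+m}, and [a_1⋯a_l]_f denotes the word whose j-th letter is the bracket of all a_i with f(i)=j. -/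
open Finsupp
open scoped Classical

noncomputable section

/-- Iterated bracket of a list of letters (as a generalized letter in `ℝ^A`);
`0` on the empty list (which never occurs below by surjectivity). -/
def brOfList {A : Type} (br : A → A → (A →₀ ℝ)) : List A → (A →₀ ℝ)
  | [] => 0
  | a :: t => t.foldl (fun c x => brExt br c (Finsupp.single x 1)) (Finsupp.single a 1)

/-- Left-concatenation of a generalized letter, extended bilinearly. -/
def preGen {A : Type} (c : A →₀ ℝ) (y : TA A) : TA A :=
  c.sum fun x r => r • (Finsupp.lmapDomain ℝ ℝ (fun u : List A => x :: u) y)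

/-- The word with the given list of generalized letters. -/
def genWord {A : Type} (l : List (A →₀ ℝ)) : TA A := l.foldr preGen (wordE [])

/-- The contracted word `[a₁⋯a_l]_f` along a surjection `f`: its `j`-th letter is
the bracket of all letters `u i` with `f i = j` (taken in increasing order of `i`). -/
def contractedBySurj {A : Type} (br : A → A → (A →₀ ℝ)) {N k : ℕ}
    (u : Fin N → A) (f : Fin N → Fin k) : TA A :=
  genWord (List.ofFn fun j : Fin k =>
    brOfList br (((Finset.univ.filter fun i : Fin N => f i = j).sort (· ≤ ·)).map u))

/-!
Both sides obey the quasi-shuffle recursion on the last letters `a = v (last)` and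
`b = w (last)`. Split a surjection increasing on both blocks into its two blocks `(g, h)`.
The top value is attained at the last point of one block or of both, and removing the
top value leaves a surjection of the same kind onto one value fewer, on the words with
`a`, `b` or both deleted. The top letter of the contracted word is then `a`, `b` or
`[a b]`, which gives the three terms `(v ⊛ wb)a + (va ⊛ w)b + (v ⊛ w)[ab]`. As each
fibre meets each block at most once, only brackets of at most two letters occur.
-/

lemma List.finRange_add (n m : ℕ) :
    List.finRange (n + m) =
      (List.finRange n).map (Fin.castAdd m) ++ (List.finRange m).map (Fin.natAdd n) := by
  rw [← List.ofFn_id, ← Fin.append_castAdd_natAdd (f := id), List.ofFn_fin_append]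
  simp [List.ofFn_eq_map]

lemma List.ofFn_eq_ofFn_init_append {α : Type*} {n : ℕ} (f : Fin (n + 1) → α) :
    List.ofFn f = List.ofFn (Fin.init f) ++ [f (Fin.last n)] := by
  rw [List.ofFn_succ', List.concat_eq_append]
  rfl

lemma Finset.sort_filter_univ_fin {n : ℕ} (p : Fin n → Prop) [DecidablePred p] :
    (Finset.univ.filter p).sort (· ≤ ·) = (List.finRange n).filter p := by
  refine List.Perm.eq_of_pairwise' (Finset.pairwise_sort _ _) ?_ ?_
  · exact (List.pairwise_le_finRange n).filter _
  · exact (List.perm_ext_iff_of_nodup (Finset.sort_nodup _ _)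
      ((List.nodup_finRange n).filter _)).2 fun x => by simp

namespace Fin

lemma range_append {α : Type*} {n m : ℕ} (g : Fin n → α) (h : Fin m → α) :
    Set.range (append g h) = Set.range g ∪ Set.range h := by
  ext x
  constructor
  · rintro ⟨i, rfl⟩
    induction i using addCases <;> simp
  · rintro (⟨i, rfl⟩ | ⟨i, rfl⟩)
    exacts [⟨_, append_left g h i⟩, ⟨_, append_right g h i⟩]

lemma append_eq_dite {α : Type*} {n m : ℕ} (v : Fin n → α) (w : Fin m → α) :
    append v w =
      fun i => if h : i.val < n then v ⟨i.val, h⟩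
        else w ⟨i.val - n, Nat.sub_lt_left_of_lt_add (not_lt.1 h) i.isLt⟩ := by
  ext i
  induction i using addCases <;> simp

lemma strictMono_comp_castAdd_iff {α : Type*} [Preorder α] {n m : ℕ} {f : Fin (n + m) → α} :
    StrictMono (fun i => f (castAdd m i)) ↔
      ∀ i j : Fin (n + m), i.val < j.val → j.val < n → f i < f j :=
  ⟨fun hf i j hij hj => hf (a := ⟨i, by omega⟩) (b := ⟨j, hj⟩) hij,
    fun hf _ _ hab => hf _ _ hab (by simp)⟩

lemma strictMono_comp_natAdd_iff {α : Type*} [Preorder α] {n m : ℕ} {f : Fin (n + m) → α} :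
    StrictMono (fun i => f (natAdd n i)) ↔
      ∀ i j : Fin (n + m), i.val < j.val → n ≤ i.val → f i < f j := by
  refine ⟨fun hf i j hij hi => ?_, fun hf a b hab => hf _ _ (by simpa using hab) (by simp)⟩
  have hmk (x : Fin (n + m)) (hx : n ≤ x.val) : natAdd n ⟨x - n, by omega⟩ = x :=
    Fin.ext (by simp; omega)
  rw [← hmk i hi, ← hmk j (by omega)]
  exact hf (mk_lt_mk.2 (by omega))

lemma strictMono_castSucc_comp_iff {α : Type*} [Preorder α] {k : ℕ} {g : α → Fin k} :
    StrictMono (castSucc ∘ g) ↔ StrictMono g :=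
  ⟨fun h _ _ hab => castSucc_lt_castSucc_iff.1 (h hab), strictMono_castSucc.comp⟩

lemma insert_last_image_castSucc_eq_univ_iff {k : ℕ} {S : Set (Fin k)} :
    insert (last k) (castSucc '' S) = Set.univ ↔ S = Set.univ := by
  simp [Set.eq_univ_iff_forall, forall_fin_succ', castSucc_ne_last]

lemma apply_last_eq_last_of_mem_range {n k : ℕ} {g : Fin (n + 1) → Fin (k + 1)}
    (hg : Monotone g) (h : last k ∈ Set.range g) : g (last n) = last k := by
  obtain ⟨i, hi⟩ := h
  exact le_antisymm (le_last _) (hi ▸ hg (le_last i))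

lemma exists_eq_castSucc_comp {n k : ℕ} {g : Fin (n + 1) → Fin (k + 1)} (hg : Monotone g)
    (h : g (last n) ≠ last k) : ∃ g' : Fin (n + 1) → Fin k, g = castSucc ∘ g' :=
  have hlt (i) : g i ≠ last k := fun hi => h (apply_last_eq_last_of_mem_range hg ⟨i, hi⟩)
  ⟨fun i => (g i).castPred (hlt i), by ext; simp⟩

end Fin

def liftTop {n k : ℕ} (g : Fin n → Fin k) : Fin (n + 1) → Fin (k + 1) :=
  Fin.snoc (Fin.castSucc ∘ g) (Fin.last k)

section LiftTop

variable {n k : ℕ}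

@[simp]
lemma liftTop_castSucc (g : Fin n → Fin k) (i : Fin n) :
    liftTop g i.castSucc = (g i).castSucc := by
  simp [liftTop]

@[simp]
lemma liftTop_last (g : Fin n → Fin k) : liftTop g (Fin.last n) = Fin.last k := by
  simp [liftTop]

lemma liftTop_injective : Function.Injective (liftTop : (Fin n → Fin k) → _) :=
  fun g g' h => funext fun i => Fin.castSucc_injective _ (by simpa using congr_fun h i.castSucc)

lemma range_liftTop (g : Fin n → Fin k) :
    Set.range (liftTop g) = insert (Fin.last k) (Fin.castSucc '' Set.range g) := by
  simp [liftTop, Fin.range_snoc, Set.range_comp]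

lemma strictMono_liftTop_iff {g : Fin n → Fin k} : StrictMono (liftTop g) ↔ StrictMono g := by
  refine ⟨fun h => Fin.strictMono_castSucc_comp_iff.1 ?_, fun hg i j hij => ?_⟩
  · simpa [Function.comp_def] using h.comp Fin.strictMono_castSucc
  · induction j using Fin.lastCases with
    | last =>
      obtain ⟨i, rfl⟩ := Fin.exists_castSucc_eq.2 hij.ne
      simp [Fin.castSucc_lt_last]
    | cast j =>
      obtain ⟨i, rfl⟩ := Fin.exists_castSucc_eq.2 (hij.trans (Fin.castSucc_lt_last j)).ne
      simpa using hg (Fin.castSucc_lt_castSucc_iff.1 hij)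

lemma exists_eq_liftTop {g : Fin (n + 1) → Fin (k + 1)} (hg : StrictMono g)
    (h : g (Fin.last n) = Fin.last k) : ∃ g' : Fin n → Fin k, g = liftTop g' := by
  have hlt (i : Fin n) : g i.castSucc ≠ Fin.last k := h ▸ (hg (Fin.castSucc_lt_last i)).ne
  refine ⟨fun i => (g i.castSucc).castPred (hlt i), ?_⟩
  ext i
  induction i using Fin.lastCases <;> simp [h]

end LiftTop

section QuasiShuffleAlgebra

variable {A : Type}

lemma appGen_single (a : A) (y : TA A) : appGen (Finsupp.single a 1) y = appLetter a y := by
  rw [appGen, Finsupp.sum_single_index (by simp), one_smul]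

lemma appGen_sum {ι : Type*} (c : A →₀ ℝ) (s : Finset ι) (g : ι → TA A) :
    appGen c (∑ i ∈ s, g i) = ∑ i ∈ s, appGen c (g i) := by
  simp only [appGen, Finsupp.sum, map_sum, Finset.smul_sum]
  exact Finset.sum_comm

lemma preGen_appGen (c d : A →₀ ℝ) (y : TA A) :
    preGen c (appGen d y) = appGen d (preGen c y) := by
  simp only [preGen, appGen, appLetter, Finsupp.sum, map_sum, map_smul, Finset.smul_sum,
    Finsupp.lmapDomain_apply, smul_smul, ← Finsupp.mapDomain_comp]
  rw [Finset.sum_comm]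
  simp only [mul_comm, Function.comp_def, List.cons_append]

lemma genWord_concat (l : List (A →₀ ℝ)) (c : A →₀ ℝ) :
    genWord (l ++ [c]) = appGen c (genWord l) := by
  induction l with
  | nil =>
    simp only [genWord, List.nil_append, List.foldr_cons, List.foldr_nil, preGen, appGen,
      appLetter, wordE, Finsupp.lmapDomain_apply, Finsupp.mapDomain_single]
  | cons d l ih =>
    simp only [genWord, List.cons_append, List.foldr_cons] at *
    rw [ih, preGen_appGen]

lemma genWord_map_single (l : List A) :
    genWord (l.map fun x => Finsupp.single x (1 : ℝ)) = wordE l := by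
  induction l with
  | nil => rfl
  | cons a l ih =>
    simp only [List.map_cons, genWord, List.foldr_cons] at *
    rw [ih, preGen, wordE, Finsupp.sum_single_index (by simp), one_smul,
      Finsupp.lmapDomain_apply, Finsupp.mapDomain_single]
    rfl

lemma brOfList_singleton (br : A → A → (A →₀ ℝ)) (a : A) :
    brOfList br [a] = Finsupp.single a 1 := rfl

lemma brOfList_pair (br : A → A → (A →₀ ℝ)) (a b : A) : brOfList br [a, b] = br a b := by
  simp [brOfList, brExt]

def fiberWord {n k : ℕ} (g : Fin n → Fin k) (w : Fin n → A) (j : Fin k) : List A :=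
  ((List.finRange n).filter (g · = j)).map w

section FiberWord

variable {n m k : ℕ}

lemma contractedBySurj_eq_genWord (br : A → A → (A →₀ ℝ)) (u : Fin n → A)
    (f : Fin n → Fin k) :
    contractedBySurj br u f = genWord (List.ofFn fun j => brOfList br (fiberWord f u j)) := by
  simp only [contractedBySurj, fiberWord, Finset.sort_filter_univ_fin]

lemma fiberWord_append (g : Fin n → Fin k) (h : Fin m → Fin k) (v : Fin n → A)
    (w : Fin m → A) (j : Fin k) :
    fiberWord (Fin.append g h) (Fin.append v w) j = fiberWord g v j ++ fiberWord h w j := by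
  simp [fiberWord, List.finRange_add, List.filter_map, Function.comp_def]

lemma fiberWord_snoc (g : Fin n → Fin k) (a : Fin k) (w : Fin n → A) (x : A) (j : Fin k) :
    fiberWord (Fin.snoc g a : Fin (n + 1) → Fin k) (Fin.snoc w x : Fin (n + 1) → A) j =
      fiberWord g w j ++ if a = j then [x] else [] := by
  by_cases h : a = j <;>
    simp [fiberWord, List.finRange_succ_last, List.filter_map, Function.comp_def, h]

lemma fiberWord_id (w : Fin n → A) (j : Fin n) : fiberWord id w j = [w j] := by
  simp [fiberWord, List.filter_eq, List.count_finRange]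

lemma fiberWord_fin_zero (g : Fin 0 → Fin k) (w : Fin 0 → A) (j : Fin k) :
    fiberWord g w j = [] := rfl

lemma fiberWord_castSucc_comp_castSucc (g : Fin n → Fin k) (w : Fin n → A) (j : Fin k) :
    fiberWord (Fin.castSucc ∘ g) w j.castSucc = fiberWord g w j := by
  simp [fiberWord]

lemma fiberWord_castSucc_comp_last (g : Fin n → Fin k) (w : Fin n → A) :
    fiberWord (Fin.castSucc ∘ g) w (Fin.last k) = [] := by
  simp [fiberWord, Fin.castSucc_ne_last]

lemma fiberWord_liftTop_castSucc (g : Fin n → Fin k) (w : Fin (n + 1) → A) (j : Fin k) :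
    fiberWord (liftTop g) w j.castSucc = fiberWord g (Fin.init w) j := by
  conv_lhs => rw [← Fin.snoc_init_self w]
  rw [liftTop, fiberWord_snoc, fiberWord_castSucc_comp_castSucc,
    if_neg (Fin.castSucc_ne_last j).symm, List.append_nil]

lemma fiberWord_liftTop_last (g : Fin n → Fin k) (w : Fin (n + 1) → A) :
    fiberWord (liftTop g) w (Fin.last k) = [w (Fin.last n)] := by
  conv_lhs => rw [← Fin.snoc_init_self w]
  rw [liftTop, fiberWord_snoc, fiberWord_castSucc_comp_last, if_pos rfl, List.nil_append]

end FiberWord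

/-- The surjections onto `Fin k` increasing on both blocks (the set `S_{n,m}`), each stored
as its pair of restrictions to the two blocks. -/
def quasiShuffleSurj (n m k : ℕ) : Finset ((Fin n → Fin k) × (Fin m → Fin k)) :=
  Finset.univ.filter fun p =>
    StrictMono p.1 ∧ StrictMono p.2 ∧ Set.range p.1 ∪ Set.range p.2 = Set.univ

section QuasiShuffleSurj

variable {n m k : ℕ}

lemma mem_quasiShuffleSurj {p : (Fin n → Fin k) × (Fin m → Fin k)} :
    p ∈ quasiShuffleSurj n m k ↔
      StrictMono p.1 ∧ StrictMono p.2 ∧ Set.range p.1 ∪ Set.range p.2 = Set.univ := by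
  simp [quasiShuffleSurj]

lemma appendEquiv_mem_filter_iff {p : (Fin n → Fin k) × (Fin m → Fin k)} :
    Fin.appendEquiv n m p ∈ (Finset.univ : Finset (Fin (n + m) → Fin k)).filter
        (fun f => Function.Surjective f ∧
          (∀ i j : Fin (n + m), i.val < j.val → j.val < n → f i < f j) ∧
          (∀ i j : Fin (n + m), i.val < j.val → n ≤ i.val → f i < f j)) ↔
      p ∈ quasiShuffleSurj n m k := by
  simp only [Finset.mem_filter, Finset.mem_univ, true_and, Fin.appendEquiv, Equiv.coe_fn_mk,
    ← Fin.strictMono_comp_castAdd_iff, ← Fin.strictMono_comp_natAdd_iff, ← Set.range_eq_univ,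
    Fin.range_append, mem_quasiShuffleSurj, Fin.append_left, Fin.append_right]
  tauto

lemma quasiShuffleSurj_eq_empty (hk : k ∉ Finset.Icc (max n m) (n + m)) :
    quasiShuffleSurj n m k = ∅ := by
  refine Finset.eq_empty_of_forall_notMem fun p hp => hk ?_
  obtain ⟨hg, hh, hcover⟩ := mem_quasiShuffleSurj.1 hp
  have hsurj : Function.Surjective (Fin.append p.1 p.2) := by
    rw [← Set.range_eq_univ, Fin.range_append, hcover]
  have hn := Fintype.card_le_of_injective _ hg.injective
  have hm := Fintype.card_le_of_injective _ hh.injective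
  have hk := Fintype.card_le_of_surjective _ hsurj
  simp only [Fintype.card_fin] at hn hm hk
  simpa using ⟨⟨hn, hm⟩, hk⟩

lemma quasiShuffleSurj_zero_right : quasiShuffleSurj n 0 n = {(id, Fin.elim0)} := by
  ext ⟨g, h⟩
  simp only [mem_quasiShuffleSurj, Set.range_eq_empty, Set.union_empty, Set.range_eq_univ,
    Finset.mem_singleton, Prod.mk.injEq]
  refine ⟨fun ⟨hg, _, _⟩ => ⟨hg.eq_id, Subsingleton.elim _ _⟩, ?_⟩
  rintro ⟨rfl, rfl⟩
  exact ⟨strictMono_id, fun i => i.elim0, Function.surjective_id⟩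

lemma quasiShuffleSurj_zero_left : quasiShuffleSurj 0 m m = {(Fin.elim0, id)} := by
  ext ⟨g, h⟩
  simp only [mem_quasiShuffleSurj, Set.range_eq_empty, Set.empty_union, Set.range_eq_univ,
    Finset.mem_singleton, Prod.mk.injEq]
  refine ⟨fun ⟨_, hh, _⟩ => ⟨Subsingleton.elim _ _, hh.eq_id⟩, ?_⟩
  rintro ⟨rfl, rfl⟩
  exact ⟨fun i => i.elim0, strictMono_id, Function.surjective_id⟩

lemma apply_last_eq_last_or {p : (Fin (n + 1) → Fin (k + 1)) × (Fin (m + 1) → Fin (k + 1))}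
    (hp : p ∈ quasiShuffleSurj (n + 1) (m + 1) (k + 1)) :
    p.1 (Fin.last n) = Fin.last k ∨ p.2 (Fin.last m) = Fin.last k := by
  obtain ⟨hg, hh, hcover⟩ := mem_quasiShuffleSurj.1 hp
  have : Fin.last k ∈ Set.range p.1 ∪ Set.range p.2 := hcover ▸ Set.mem_univ _
  exact this.imp (Fin.apply_last_eq_last_of_mem_range hg.monotone)
    (Fin.apply_last_eq_last_of_mem_range hh.monotone)

variable {g : Fin n → Fin k} {h : Fin m → Fin k}

lemma liftTop_castSucc_comp_mem_iff :
    (liftTop g, Fin.castSucc ∘ h) ∈ quasiShuffleSurj (n + 1) m (k + 1) ↔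
      (g, h) ∈ quasiShuffleSurj n m k := by
  simp [mem_quasiShuffleSurj, strictMono_liftTop_iff, Fin.strictMono_castSucc_comp_iff,
    range_liftTop, Set.range_comp, Set.insert_union, ← Set.image_union,
    Fin.insert_last_image_castSucc_eq_univ_iff]

lemma castSucc_comp_liftTop_mem_iff :
    (Fin.castSucc ∘ g, liftTop h) ∈ quasiShuffleSurj n (m + 1) (k + 1) ↔
      (g, h) ∈ quasiShuffleSurj n m k := by
  simp [mem_quasiShuffleSurj, strictMono_liftTop_iff, Fin.strictMono_castSucc_comp_iff,
    range_liftTop, Set.range_comp, Set.union_insert, ← Set.image_union,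
    Fin.insert_last_image_castSucc_eq_univ_iff]

lemma liftTop_liftTop_mem_iff :
    (liftTop g, liftTop h) ∈ quasiShuffleSurj (n + 1) (m + 1) (k + 1) ↔
      (g, h) ∈ quasiShuffleSurj n m k := by
  simp [mem_quasiShuffleSurj, strictMono_liftTop_iff, range_liftTop, Set.insert_union,
    Set.union_insert, ← Set.image_union, Fin.insert_last_image_castSucc_eq_univ_iff]

end QuasiShuffleSurj

section Contraction

variable (br : A → A → (A →₀ ℝ))

def contractedPair {n m k : ℕ} (v : Fin n → A) (w : Fin m → A)
    (p : (Fin n → Fin k) × (Fin m → Fin k)) : TA A :=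
  contractedBySurj br (Fin.append v w) (Fin.append p.1 p.2)

lemma contractedPair_eq_appGen {n m n' m' k : ℕ} {v : Fin n → A} {w : Fin m → A}
    {v' : Fin n' → A} {w' : Fin m' → A} {p : (Fin n → Fin (k + 1)) × (Fin m → Fin (k + 1))}
    {q : (Fin n' → Fin k) × (Fin m' → Fin k)}
    (hv : ∀ j, fiberWord p.1 v j.castSucc = fiberWord q.1 v' j)
    (hw : ∀ j, fiberWord p.2 w j.castSucc = fiberWord q.2 w' j) :
    contractedPair br v w p =
      appGen (brOfList br (fiberWord p.1 v (Fin.last k) ++ fiberWord p.2 w (Fin.last k)))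
        (contractedPair br v' w' q) := by
  simp only [contractedPair, contractedBySurj_eq_genWord, List.ofFn_succ', List.concat_eq_append,
    genWord_concat, fiberWord_append, hv, hw]

variable {n m k : ℕ} (v : Fin (n + 1) → A) (w : Fin (m + 1) → A)

lemma sum_filter_liftTop_castSucc_comp :
    ∑ p ∈ (quasiShuffleSurj (n + 1) (m + 1) (k + 1)).filter
        (fun p => p.1 (Fin.last n) = Fin.last k ∧ p.2 (Fin.last m) ≠ Fin.last k),
      contractedPair br v w p =
    appLetter (v (Fin.last n))
      (∑ q ∈ quasiShuffleSurj n (m + 1) k, contractedPair br (Fin.init v) w q) := by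
  rw [map_sum]
  symm
  refine Finset.sum_nbij (fun q => (liftTop q.1, Fin.castSucc ∘ q.2)) ?_ ?_ ?_ ?_
  · rintro ⟨g, h⟩ hq
    simp [liftTop_castSucc_comp_mem_iff.2 hq, Fin.castSucc_ne_last]
  · rintro ⟨g, h⟩ - ⟨g', h'⟩ - heq
    simp only [Prod.mk.injEq] at heq
    exact Prod.ext (liftTop_injective heq.1) ((Fin.castSucc_injective _).comp_left heq.2)
  · rintro ⟨g, h⟩ hp
    obtain ⟨hp, hg, hh⟩ := Finset.mem_filter.1 hp
    obtain ⟨hgm, hhm, -⟩ := mem_quasiShuffleSurj.1 hp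
    obtain ⟨g', rfl⟩ := exists_eq_liftTop hgm hg
    obtain ⟨h', rfl⟩ := Fin.exists_eq_castSucc_comp hhm.monotone hh
    exact ⟨(g', h'), liftTop_castSucc_comp_mem_iff.1 hp, rfl⟩
  · intro q _
    rw [contractedPair_eq_appGen br (fiberWord_liftTop_castSucc _ _)
      (fiberWord_castSucc_comp_castSucc _ _), fiberWord_liftTop_last,
      fiberWord_castSucc_comp_last, List.append_nil, brOfList_singleton, appGen_single]

lemma sum_filter_castSucc_comp_liftTop :
    ∑ p ∈ (quasiShuffleSurj (n + 1) (m + 1) (k + 1)).filter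
        (fun p => p.1 (Fin.last n) ≠ Fin.last k),
      contractedPair br v w p =
    appLetter (w (Fin.last m))
      (∑ q ∈ quasiShuffleSurj (n + 1) m k, contractedPair br v (Fin.init w) q) := by
  rw [map_sum]
  symm
  refine Finset.sum_nbij (fun q => (Fin.castSucc ∘ q.1, liftTop q.2)) ?_ ?_ ?_ ?_
  · rintro ⟨g, h⟩ hq
    simp [castSucc_comp_liftTop_mem_iff.2 hq, Fin.castSucc_ne_last]
  · rintro ⟨g, h⟩ - ⟨g', h'⟩ - heq
    simp only [Prod.mk.injEq] at heq
    exact Prod.ext ((Fin.castSucc_injective _).comp_left heq.1) (liftTop_injective heq.2)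
  · rintro ⟨g, h⟩ hp
    obtain ⟨hp, hg⟩ := Finset.mem_filter.1 hp
    have hh := (apply_last_eq_last_or hp).resolve_left hg
    obtain ⟨hgm, hhm, -⟩ := mem_quasiShuffleSurj.1 hp
    obtain ⟨g', rfl⟩ := Fin.exists_eq_castSucc_comp hgm.monotone hg
    obtain ⟨h', rfl⟩ := exists_eq_liftTop hhm hh
    exact ⟨(g', h'), castSucc_comp_liftTop_mem_iff.1 hp, rfl⟩
  · intro q _
    rw [contractedPair_eq_appGen br (fiberWord_castSucc_comp_castSucc _ _)
      (fiberWord_liftTop_castSucc _ _), fiberWord_liftTop_last,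
      fiberWord_castSucc_comp_last, List.nil_append, brOfList_singleton, appGen_single]

lemma sum_filter_liftTop_liftTop :
    ∑ p ∈ (quasiShuffleSurj (n + 1) (m + 1) (k + 1)).filter
        (fun p => p.1 (Fin.last n) = Fin.last k ∧ p.2 (Fin.last m) = Fin.last k),
      contractedPair br v w p =
    appGen (br (v (Fin.last n)) (w (Fin.last m)))
      (∑ q ∈ quasiShuffleSurj n m k, contractedPair br (Fin.init v) (Fin.init w) q) := by
  rw [appGen_sum]
  symm
  refine Finset.sum_nbij (fun q => (liftTop q.1, liftTop q.2)) ?_ ?_ ?_ ?_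
  · rintro ⟨g, h⟩ hq
    simp [liftTop_liftTop_mem_iff.2 hq]
  · rintro ⟨g, h⟩ - ⟨g', h'⟩ - heq
    simp only [Prod.mk.injEq] at heq
    exact Prod.ext (liftTop_injective heq.1) (liftTop_injective heq.2)
  · rintro ⟨g, h⟩ hp
    obtain ⟨hp, hg, hh⟩ := Finset.mem_filter.1 hp
    obtain ⟨hgm, hhm, -⟩ := mem_quasiShuffleSurj.1 hp
    obtain ⟨g', rfl⟩ := exists_eq_liftTop hgm hg
    obtain ⟨h', rfl⟩ := exists_eq_liftTop hhm hh
    exact ⟨(g', h'), liftTop_liftTop_mem_iff.1 hp, rfl⟩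
  · intro q _
    rw [contractedPair_eq_appGen br (fiberWord_liftTop_castSucc _ _)
      (fiberWord_liftTop_castSucc _ _), fiberWord_liftTop_last, fiberWord_liftTop_last,
      List.singleton_append, brOfList_pair]

lemma sum_quasiShuffleSurj_succ :
    ∑ p ∈ quasiShuffleSurj (n + 1) (m + 1) (k + 1), contractedPair br v w p =
      appLetter (v (Fin.last n))
          (∑ q ∈ quasiShuffleSurj n (m + 1) k, contractedPair br (Fin.init v) w q) +
        appLetter (w (Fin.last m))
          (∑ q ∈ quasiShuffleSurj (n + 1) m k, contractedPair br v (Fin.init w) q) +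
        appGen (br (v (Fin.last n)) (w (Fin.last m)))
          (∑ q ∈ quasiShuffleSurj n m k, contractedPair br (Fin.init v) (Fin.init w) q) := by
  rw [← Finset.sum_filter_add_sum_filter_not _ (fun p => p.1 (Fin.last n) = Fin.last k),
    ← Finset.sum_filter_add_sum_filter_not (Finset.filter _ _)
      (fun p => p.2 (Fin.last m) = Fin.last k),
    Finset.filter_filter, Finset.filter_filter, sum_filter_liftTop_castSucc_comp,
    sum_filter_castSucc_comp_liftTop, sum_filter_liftTop_liftTop]
  abel

end Contraction

section QuasiShuffleSum

variable (br : A → A → (A →₀ ℝ))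

def quasiShuffleSum {n m : ℕ} (v : Fin n → A) (w : Fin m → A) : TA A :=
  ∑ k ∈ Finset.Icc (max n m) (n + m), ∑ p ∈ quasiShuffleSurj n m k, contractedPair br v w p

lemma sum_eq_quasiShuffleSum {n m : ℕ} (v : Fin n → A) (w : Fin m → A) {s : Finset ℕ}
    (hs : Finset.Icc (max n m) (n + m) ⊆ s) :
    ∑ k ∈ s, ∑ p ∈ quasiShuffleSurj n m k, contractedPair br v w p =
      quasiShuffleSum br v w :=
  (Finset.sum_subset hs fun _ _ hk => by
    rw [quasiShuffleSurj_eq_empty hk, Finset.sum_empty]).symm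

lemma quasiShuffleSum_succ {n m : ℕ} (v : Fin (n + 1) → A) (w : Fin (m + 1) → A) :
    quasiShuffleSum br v w =
      appLetter (v (Fin.last n)) (quasiShuffleSum br (Fin.init v) w) +
        appLetter (w (Fin.last m)) (quasiShuffleSum br v (Fin.init w)) +
        appGen (br (v (Fin.last n)) (w (Fin.last m)))
          (quasiShuffleSum br (Fin.init v) (Fin.init w)) := by
  have hs {a b N : ℕ} (h : a + b < N) : Finset.Icc (max a b) (a + b) ⊆ Finset.range N :=
    fun k hk => by
      simp only [Finset.mem_Icc, Finset.mem_range] at hk ⊢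
      omega
  rw [← sum_eq_quasiShuffleSum br v w (hs (N := n + m + 3) (by omega)),
    Finset.sum_range_succ', quasiShuffleSurj_eq_empty (by simp), Finset.sum_empty, add_zero]
  simp only [sum_quasiShuffleSurj_succ, Finset.sum_add_distrib, ← map_sum, ← appGen_sum]
  rw [sum_eq_quasiShuffleSum br _ _ (hs (by omega)), sum_eq_quasiShuffleSum br _ _ (hs (by omega)),
    sum_eq_quasiShuffleSum br _ _ (hs (by omega))]

lemma quasiShuffleSum_zero_right {n : ℕ} (v : Fin n → A) (w : Fin 0 → A) :
    quasiShuffleSum br v w = wordE (List.ofFn v) := by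
  simp [quasiShuffleSum, quasiShuffleSurj_zero_right, contractedPair, contractedBySurj_eq_genWord,
    fiberWord_append, fiberWord_id, fiberWord_fin_zero, brOfList_singleton,
    ← genWord_map_single, List.map_ofFn, Function.comp_def]

lemma quasiShuffleSum_zero_left {m : ℕ} (v : Fin 0 → A) (w : Fin m → A) :
    quasiShuffleSum br v w = wordE (List.ofFn w) := by
  simp [quasiShuffleSum, quasiShuffleSurj_zero_left, contractedPair, contractedBySurj_eq_genWord,
    fiberWord_append, fiberWord_id, fiberWord_fin_zero, brOfList_singleton,
    ← genWord_map_single, List.map_ofFn, Function.comp_def]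

end QuasiShuffleSum

theorem IsQuasiShuffle.apply_eq_quasiShuffleSum {br : A → A → (A →₀ ℝ)}
    {M : TA A →ₗ[ℝ] TA A →ₗ[ℝ] TA A} (hM : IsQuasiShuffle br M) {n m : ℕ}
    (v : Fin n → A) (w : Fin m → A) :
    M (wordE (List.ofFn v)) (wordE (List.ofFn w)) = quasiShuffleSum br v w := by
  obtain ⟨hleft, hright, hstep⟩ := hM
  induction n generalizing m with
  | zero => rw [List.ofFn_zero, hleft, quasiShuffleSum_zero_left]
  | succ n ihn =>
    induction m with
    | zero => rw [List.ofFn_zero, hright, quasiShuffleSum_zero_right]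
    | succ m ihm =>
      rw [List.ofFn_eq_ofFn_init_append v, List.ofFn_eq_ofFn_init_append w, hstep,
        ← List.ofFn_eq_ofFn_init_append v, ← List.ofFn_eq_ofFn_init_append w, ihn, ihn,
        ihm, quasiShuffleSum_succ]

end QuasiShuffleAlgebra

/-- the quasi-shuffle product of two non-empty words is the sum of
the contracted words over all surjections that are increasing on each block. -/
theorem quasiShuffle_surjection_formula {A : Type}
    (br : A → A → (A →₀ ℝ))
    (M : TA A →ₗ[ℝ] TA A →ₗ[ℝ] TA A)
    (hM : IsQuasiShuffle br M)
    (n m : ℕ)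
    (wa : Fin n → A) (wb : Fin m → A) :
    M (wordE (List.ofFn wa)) (wordE (List.ofFn wb)) =
      ∑ k ∈ Finset.Icc (max n m) (n + m),
        ∑ f ∈ (Finset.univ : Finset (Fin (n + m) → Fin k)).filter
            (fun f => Function.Surjective f ∧
              (∀ i j : Fin (n + m), i.val < j.val → j.val < n → f i < f j) ∧
              (∀ i j : Fin (n + m), i.val < j.val → n ≤ i.val → f i < f j)),
          contractedBySurj br
            (fun i : Fin (n + m) =>
              if h : i.val < n then wa ⟨i.val, h⟩
              else wb ⟨i.val - n, by omega⟩) f := by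
  rw [hM.apply_eq_quasiShuffleSum, ← Fin.append_eq_dite]
  refine Finset.sum_congr rfl fun k _ => ?_
  exact (Finset.sum_equiv (Fin.appendEquiv n m) (fun _ => appendEquiv_mem_filter_iff.symm)
    fun _ _ => rfl)

end
end

section
/- Let γ ∈ (0,1), d ≥ 1, and let A_γ^d be the alphabet of tuples (i_1⋯i_n) with i_j ∈ {1,…,d} and 1 ≤ n ≤ ⌊1/γ⌋. Define the bracket polynomial ⟪i_1⋯i_n⟫ = •_{i_1}⋯•_{i_n} − Σ_{{a,b}} B^+_{(b_1⋯b_k)}(•_{a_1}⋯•_{a_{n-k}}), summing over splittings of {i_1,…,i_n} into two non-empty parts. Then in the Butcher–Connes–Kreimer Hopf algebra H(A_γ^d) one has Δ⟪i_1⋯i_n⟫ = ⟪i_1⋯i_n⟫ ⊗ 1 + 1 ⊗ ⟪i_1⋯i_n⟫ + Σ_{{a,b}} •_{a_1}⋯•_{a_{n-k}} ⊗ (⟪b_1⋯b_k⟫ − •_{(b_1⋯b_k)}). -/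
open scoped TensorProduct Classical

noncomputable section

/-- The sub-tuple of the list `l` indexed by a set of positions `S`
(taken in increasing order of positions). -/
def subL {d : ℕ} (l : List (Fin d)) (S : Finset (Fin l.length)) : List (Fin d) :=
  (S.sort (· ≤ ·)).map l.get

/-- The forest of single nodes `•_{i₁}⋯•_{iₙ}` with decorations from `l`. -/
def dotP {d : ℕ} {H : Type*} [CommRing H] [Algebra ℝ H]
    (B : List (Fin d) → H →ₗ[ℝ] H) (l : List (Fin d)) : H :=
  (l.map fun i => B [i] (1 : H)).prod

/-- The bracket polynomial
`⟪i₁⋯iₙ⟫ = •_{i₁}⋯•_{iₙ} − Σ_{{a,b}} B⁺_{(b)}(•_{a})`,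
the sum over all splittings of the indices into two non-empty parts. -/
def bpOf {d : ℕ} {H : Type*} [CommRing H] [Algebra ℝ H]
    (B : List (Fin d) → H →ₗ[ℝ] H) (l : List (Fin d)) : H :=
  dotP B l -
    ∑ S ∈ (Finset.univ : Finset (Finset (Fin l.length))).filter
        (fun S => S ≠ ∅ ∧ S ≠ Finset.univ),
      B (subL l S) (dotP B (subL l Sᶜ))

/-!
Index the nodes by the positions of the word and write `P(s) = ∏_{i ∈ s} •_{i}`,
`g_V = B⁺_{(V)}`. The single nodes are primitive, so `Δ P(s) = Σ_{U ⊆ s} P(s ∖ U) ⊗ P(U)`, and the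
grafting recursion gives
`Δ g_V(P(s ∖ V)) = g_V(P(s ∖ V)) ⊗ 1 + Σ_{U ⊆ s ∖ V} P(s ∖ V ∖ U) ⊗ g_V(P(U))`.
In the latter sum, `U = ∅` contributes the correction `P(s ∖ V) ⊗ •_{(V)}`, `U = s ∖ V` contributes
`1 ⊗ g_V(P(s ∖ V))`, and the remaining terms, reindexed by `T = V ∪ U`, are exactly the grafted
parts of the brackets in `P(s ∖ T) ⊗ ⟪T⟫`. So the identity holds for any finite set of positions;
the word itself enters only through the fact that a sub-word of a sub-word is a sub-word.
-/

namespace Finset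

variable {ι : Type*} [DecidableEq ι]

def nontrivialSubsets (s : Finset ι) : Finset (Finset ι) :=
  s.powerset.filter fun V => V ≠ ∅ ∧ V ≠ s

@[simp] lemma mem_nontrivialSubsets {s V : Finset ι} :
    V ∈ s.nontrivialSubsets ↔ V ⊆ s ∧ V ≠ ∅ ∧ V ≠ s := by
  simp [nontrivialSubsets]

lemma sdiff_ne_empty_of_mem_nontrivialSubsets {s V : Finset ι} (hV : V ∈ s.nontrivialSubsets) :
    s \ V ≠ ∅ := by
  grind [mem_nontrivialSubsets, sdiff_eq_empty_iff_subset]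

lemma sum_powerset_eq_add_add_sum_nontrivialSubsets {M : Type*} [AddCommMonoid M]
    {s : Finset ι} (hs : s ≠ ∅) (f : Finset ι → M) :
    ∑ U ∈ s.powerset, f U = f ∅ + f s + ∑ U ∈ s.nontrivialSubsets, f U := by
  rw [nontrivialSubsets, ← sum_filter_not_add_sum_filter _ (fun V => V ≠ ∅ ∧ V ≠ s),
    show s.powerset.filter (fun V => ¬(V ≠ ∅ ∧ V ≠ s)) = {∅, s} by ext; grind,
    sum_pair hs.symm]

lemma sum_sum_nontrivialSubsets_sdiff {M : Type*} [AddCommMonoid M]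
    (s : Finset ι) (F : Finset ι → Finset ι → M) :
    ∑ V ∈ s.nontrivialSubsets, ∑ U ∈ (s \ V).nontrivialSubsets, F V U =
      ∑ T ∈ s.nontrivialSubsets, ∑ W ∈ T.nontrivialSubsets, F W (T \ W) := by
  rw [sum_sigma', sum_sigma']
  have cancel {V U : Finset ι} (hU : U ⊆ s \ V) : (V ∪ U) \ V = U :=
    union_sdiff_cancel_left (disjoint_of_subset_right hU disjoint_sdiff_self_right)
  refine sum_nbij' (fun p => ⟨p.1 ∪ p.2, p.1⟩) (fun q => ⟨q.2, q.1 \ q.2⟩) ?_ ?_ ?_ ?_ ?_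
  all_goals rintro ⟨V, U⟩; simp only [mem_sigma, mem_nontrivialSubsets]
  · grind
  · grind [sdiff_eq_empty_iff_subset, sdiff_subset_sdiff, sdiff_sdiff_eq_self]
  · rintro ⟨-, hU, -⟩; rw [cancel hU]
  · rintro ⟨-, hU, -⟩; rw [union_sdiff_of_subset hU]
  · rintro ⟨-, hU, -⟩; rw [cancel hU]

lemma nontrivialSubsets_univ [Fintype ι] :
    (univ : Finset ι).nontrivialSubsets = univ.filter fun V => V ≠ ∅ ∧ V ≠ univ := by
  rw [nontrivialSubsets, powerset_univ]

lemma nontrivialSubsets_map {κ : Type*} [DecidableEq κ] (e : ι ↪ κ) (s : Finset ι) :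
    (s.map e).nontrivialSubsets = s.nontrivialSubsets.map (mapEmbedding e).toEmbedding := by
  ext V
  simp only [mem_nontrivialSubsets, mem_map, subset_map_iff, RelEmbedding.coe_toEmbedding,
    mapEmbedding_apply]
  constructor
  · rintro ⟨⟨u, hu, rfl⟩, hne, hns⟩
    exact ⟨u, ⟨hu, by simpa using hne, by simpa using hns⟩, rfl⟩
  · rintro ⟨u, ⟨hu, hne, hns⟩, rfl⟩
    exact ⟨⟨u, hu, rfl⟩, by simpa using hne, by simpa using hns⟩

end Finset

open Finset TensorProduct

section Primitive

variable {R A ι : Type*} [CommSemiring R] [CommSemiring A] [Algebra R A]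

lemma coproduct_prod_of_primitive [DecidableEq ι] (Δ : A →ₐ[R] A ⊗[R] A) {x : ι → A}
    (hx : ∀ i, Δ (x i) = x i ⊗ₜ[R] 1 + 1 ⊗ₜ[R] x i) (s : Finset ι) :
    Δ (∏ i ∈ s, x i) = ∑ U ∈ s.powerset, (∏ i ∈ s \ U, x i) ⊗ₜ[R] (∏ i ∈ U, x i) := by
  simp_rw [map_prod, hx, add_comm (x _ ⊗ₜ[R] (1 : A)), prod_add]
  refine sum_congr rfl fun U _ => ?_
  have hR := map_prod (Algebra.TensorProduct.includeRight : A →ₐ[R] A ⊗[R] A) x U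
  have hL := map_prod (Algebra.TensorProduct.includeLeft : A →ₐ[R] A ⊗[R] A) x (s \ U)
  simp only [Algebra.TensorProduct.includeRight_apply,
    Algebra.TensorProduct.includeLeft_apply] at hR hL
  rw [← hR, ← hL, Algebra.TensorProduct.tmul_mul_tmul, one_mul, mul_one]

end Primitive

section Bracket

variable {R A ι : Type*} [CommSemiring R] [CommRing A] [Algebra R A] [DecidableEq ι]

/-- The bracket polynomial `⟪s⟫` of a set of positions `s`, where `x i = •_{i}` is the single
node at position `i` and `g V = B⁺_{(V)}` grafts onto a root decorated by the subword at `V`. -/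
def bracketPolynomial (x : ι → A) (g : Finset ι → A →ₗ[R] A) (s : Finset ι) : A :=
  ∏ i ∈ s, x i - ∑ V ∈ s.nontrivialSubsets, g V (∏ i ∈ s \ V, x i)

lemma bracketPolynomial_map {κ : Type*} [DecidableEq κ] (x : κ → A) (g : Finset κ → A →ₗ[R] A)
    (e : ι ↪ κ) (s : Finset ι) :
    bracketPolynomial x g (s.map e) = bracketPolynomial (x ∘ e) (fun V => g (V.map e)) s := by
  simp only [bracketPolynomial, nontrivialSubsets_map, sum_map, RelEmbedding.coe_toEmbedding,
    mapEmbedding_apply, ← Finset.map_sdiff, prod_map, Function.comp_apply]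

variable (Δ : A →ₐ[R] A ⊗[R] A) {x : ι → A} {g : Finset ι → A →ₗ[R] A}

lemma coproduct_graft_prod_of_primitive (hx : ∀ i, Δ (x i) = x i ⊗ₜ[R] 1 + 1 ⊗ₜ[R] x i)
    (hg : ∀ V σ, Δ (g V σ) = g V σ ⊗ₜ[R] 1 + (g V).lTensor A (Δ σ))
    {s : Finset ι} (hs : s ≠ ∅) (V : Finset ι) :
    Δ (g V (∏ i ∈ s, x i)) = g V (∏ i ∈ s, x i) ⊗ₜ[R] 1 +
      ((∏ i ∈ s, x i) ⊗ₜ[R] g V 1 + 1 ⊗ₜ[R] g V (∏ i ∈ s, x i) +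
        ∑ U ∈ s.nontrivialSubsets, (∏ i ∈ s \ U, x i) ⊗ₜ[R] g V (∏ i ∈ U, x i)) := by
  rw [hg, coproduct_prod_of_primitive Δ hx, map_sum,
    sum_powerset_eq_add_add_sum_nontrivialSubsets hs]
  simp only [LinearMap.lTensor_tmul, sdiff_empty, sdiff_self, bot_eq_empty, prod_empty]

theorem coproduct_bracketPolynomial (hx : ∀ i, Δ (x i) = x i ⊗ₜ[R] 1 + 1 ⊗ₜ[R] x i)
    (hg : ∀ V σ, Δ (g V σ) = g V σ ⊗ₜ[R] 1 + (g V).lTensor A (Δ σ))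
    {s : Finset ι} (hs : s ≠ ∅) :
    Δ (bracketPolynomial x g s) =
      bracketPolynomial x g s ⊗ₜ[R] 1 + 1 ⊗ₜ[R] bracketPolynomial x g s +
        ∑ V ∈ s.nontrivialSubsets,
          (∏ i ∈ s \ V, x i) ⊗ₜ[R] (bracketPolynomial x g V - g V 1) := by
  have hgraft : ∀ V ∈ s.nontrivialSubsets, Δ (g V (∏ i ∈ s \ V, x i)) = _ := fun V hV =>
    coproduct_graft_prod_of_primitive Δ hx hg (sdiff_ne_empty_of_mem_nontrivialSubsets hV) V
  have hswap : ∑ V ∈ s.nontrivialSubsets, ∑ U ∈ (s \ V).nontrivialSubsets,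
        (∏ i ∈ (s \ V) \ U, x i) ⊗ₜ[R] g V (∏ i ∈ U, x i) =
      ∑ T ∈ s.nontrivialSubsets, ∑ W ∈ T.nontrivialSubsets,
        (∏ i ∈ s \ T, x i) ⊗ₜ[R] g W (∏ i ∈ T \ W, x i) := by
    rw [sum_sum_nontrivialSubsets_sdiff]
    refine sum_congr rfl fun T _ => sum_congr rfl fun W hW => ?_
    rw [sdiff_sdiff_sdiff_cancel_right (mem_nontrivialSubsets.1 hW).1]
  simp only [bracketPolynomial, map_sub, map_sum, sum_congr rfl hgraft,
    coproduct_prod_of_primitive Δ hx, sum_powerset_eq_add_add_sum_nontrivialSubsets hs,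
    sub_tmul, tmul_sub, sum_tmul, tmul_sum, sum_add_distrib, sum_sub_distrib,
    sdiff_empty, sdiff_self, bot_eq_empty, prod_empty]
  rw [hswap]
  abel

end Bracket

section Words

variable {d : ℕ}

lemma length_subL (l : List (Fin d)) (S : Finset (Fin l.length)) :
    (subL l S).length = S.card := by
  simp [subL]

lemma get_subL (l : List (Fin d)) (S : Finset (Fin l.length)) (j : Fin (subL l S).length) :
    (subL l S).get j = l.get (S.orderEmbOfFin (length_subL l S).symm j) := by
  simp only [List.get_eq_getElem]
  simp [subL]
  rfl

lemma subL_subL (l : List (Fin d)) (S : Finset (Fin l.length))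
    (T : Finset (Fin (subL l S).length)) :
    subL (subL l S) T = subL l (T.map (S.orderEmbOfFin (length_subL l S).symm).toEmbedding) := by
  show (T.sort (· ≤ ·)).map (subL l S).get = ((T.map _).sort (· ≤ ·)).map l.get
  rw [← ((S.orderEmbOfFin _).strictMono.strictMonoOn _).map_finsetSort, List.map_map]
  exact List.map_congr_left fun j _ => get_subL l S j

lemma subL_univ (l : List (Fin d)) : subL l univ = l := by
  rw [subL, Fin.sort_univ, List.map_get_finRange]

variable {H : Type*} [CommRing H] [Algebra ℝ H] (B : List (Fin d) → H →ₗ[ℝ] H)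

lemma dotP_subL (l : List (Fin d)) (S : Finset (Fin l.length)) :
    dotP B (subL l S) = ∏ i ∈ S, B [l.get i] 1 := by
  rw [dotP, subL, List.map_map, prod_eq_multiset_prod, ← sort_eq S (· ≤ ·),
    Multiset.map_coe, Multiset.prod_coe]
  rfl

lemma bpOf_eq_bracketPolynomial (l : List (Fin d)) :
    bpOf B l = bracketPolynomial (fun i => B [l.get i] 1) (fun V => B (subL l V)) univ := by
  have hdot : dotP B l = ∏ i, B [l.get i] 1 := by simpa [subL_univ] using dotP_subL B l univ
  simp only [bpOf, bracketPolynomial, hdot, dotP_subL, nontrivialSubsets_univ,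
    compl_eq_univ_sdiff]

lemma bpOf_subL (l : List (Fin d)) (S : Finset (Fin l.length)) :
    bpOf B (subL l S) = bracketPolynomial (fun i => B [l.get i] 1) (fun V => B (subL l V)) S := by
  rw [bpOf_eq_bracketPolynomial]
  conv_rhs => rw [← map_orderEmbOfFin_univ S (length_subL l S).symm, bracketPolynomial_map]
  simp only [Function.comp_def, get_subL, subL_subL, RelEmbedding.coe_toEmbedding]

end Words

theorem coproduct_of_bracket_polynomial_general {d : ℕ} {H : Type*}
    [CommRing H] [Algebra ℝ H]
    (Δ : H →ₐ[ℝ] H ⊗[ℝ] H)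
    (B : List (Fin d) → H →ₗ[ℝ] H)
    (hΔB : ∀ (a : List (Fin d)) (σ : H),
      Δ (B a σ) = B a σ ⊗ₜ[ℝ] 1 + LinearMap.lTensor H (B a) (Δ σ))
    (l : List (Fin d)) (hl : l ≠ []) :
    Δ (bpOf B l) =
      bpOf B l ⊗ₜ[ℝ] 1 + 1 ⊗ₜ[ℝ] bpOf B l +
      ∑ S ∈ (Finset.univ : Finset (Finset (Fin l.length))).filter
          (fun S => S ≠ ∅ ∧ S ≠ Finset.univ),
        dotP B (subL l Sᶜ) ⊗ₜ[ℝ] (bpOf B (subL l S) - B (subL l S) 1) := by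
  have hdot (a : List (Fin d)) : Δ (B a 1) = B a 1 ⊗ₜ[ℝ] 1 + 1 ⊗ₜ[ℝ] B a 1 := by
    rw [hΔB, map_one Δ, Algebra.TensorProduct.one_def, LinearMap.lTensor_tmul]
  have huniv : (univ : Finset (Fin l.length)) ≠ ∅ :=
    (univ_nonempty_iff.2 ⟨⟨0, List.length_pos_iff.2 hl⟩⟩).ne_empty
  simp only [bpOf_subL, dotP_subL, compl_eq_univ_sdiff, ← nontrivialSubsets_univ]
  rw [bpOf_eq_bracketPolynomial]
  exact coproduct_bracketPolynomial Δ (fun i => hdot _) (fun V => hΔB (subL l V)) huniv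

/-- coproduct of the bracket polynomial in the BCK Hopf algebra over
the alphabet `A_γ^d` of tuples of length `≤ N_γ` (formalized through the defining
structure: `Δ` a multiplicative coproduct satisfying the grafting recursion for the
operators `B⁺_a`). -/
theorem coproduct_of_bracket_polynomial {d : ℕ} {H : Type*}
    [CommRing H] [Algebra ℝ H]
    (γ : ℝ) (hγ0 : 0 < γ) (hγ1 : γ < 1)
    (Δ : H →ₐ[ℝ] H ⊗[ℝ] H)
    (B : List (Fin d) → H →ₗ[ℝ] H)
    (hΔB : ∀ (a : List (Fin d)) (σ : H),
      Δ (B a σ) = B a σ ⊗ₜ[ℝ] 1 + LinearMap.lTensor H (B a) (Δ σ))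
    (l : List (Fin d)) (hl : l ≠ []) (hlen : l.length ≤ Nat.floor γ⁻¹) :
    Δ (bpOf B l) =
      bpOf B l ⊗ₜ[ℝ] 1 + 1 ⊗ₜ[ℝ] bpOf B l +
      ∑ S ∈ (Finset.univ : Finset (Finset (Fin l.length))).filter
          (fun S => S ≠ ∅ ∧ S ≠ Finset.univ),
        dotP B (subL l Sᶜ) ⊗ₜ[ℝ] (bpOf B (subL l S) - B (subL l S) 1) :=
  coproduct_of_bracket_polynomial_general Δ B hΔB l hl
end
end
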